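/- The function F̃(α, β) := (Γ(α)Γ(β)/Γ(α+β))² · ₃F₂(α, β, α+β−1; α+β, α+β; 1) is strictly monotonically decreasing in α on (0, ∞) for each fixed β > 0 with α + β > 1; in particular F̃(1/4, 1/2) − F̃(3/4, 1/2) > 0. -/

import Mathlib

/-- Pochhammer symbol (a)ₘ = a(a+1)⋯(a+m−1). -/
noncomputable def poch (a : ℝ) (m : ℕ) : ℝ := ∏ i ∈ Finset.range m, (a + i)

/-- Generalized hypergeometric series ₃F₂(a,b,c; e,f; z). -/
noncomputable def F32 (a b c e f z : ℝ) : ℝ :=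
  ∑' n : ℕ, poch a n * poch b n * poch c n / (poch e n * poch f n * n.factorial) * z ^ n

/-- F̃(α,β) = (Γ(α)Γ(β)/Γ(α+β))² · ₃F₂(α, β, α+β−1; α+β, α+β; 1). -/
noncomputable def Ftilde (α β : ℝ) : ℝ :=
  (Real.Gamma α * Real.Gamma β / Real.Gamma (α + β)) ^ 2 *
    F32 α β (α + β - 1) (α + β) (α + β) 1

/-!
Expanding `(1 - xy)^(1-α-β)` binomially and integrating term by term against the Beta weights
`x^(α-1) (1-x)^(β-1) y^(β-1) (1-y)^(α-1)` on the unit square reproduces the terms of the `₃F₂`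
series, since `B(α+n, β) B(β+n, α) = B(α, β)² (α)ₙ (β)ₙ / (α+β)ₙ²`. Hence for all `α, β > 0`
`F̃(α, β) = ∬ x^(α-1) (1-x)^(β-1) y^(β-1) (1-y)^(α-1) (1-xy)^(1-α-β) dx dy`, and the integrand
equals `u^(α-1) (1-x)^(β-1) y^(β-1) (1-xy)^(-β)` with `u = x(1-y)/(1-xy) ∈ (0, 1)`, which is
strictly decreasing in `α`.

The exchange of sum and integral is dominated convergence: the coefficients `(r)ₙ/n!`,
`r = α+β-1 ≥ -1`, have constant sign for `n ≥ 1`, so the absolute series sums to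
`1 + |(1-xy)^(-r) - 1|`, and `(1-xy)^(-r) ≤ (1-x)^(-βr/(α+β)) (1-y)^(-αr/(α+β))` keeps the
dominating function integrable.
-/

open MeasureTheory Set Filter

@[simp] lemma poch_zero (a : ℝ) : poch a 0 = 1 := Finset.prod_range_zero _

lemma poch_succ (a : ℝ) (n : ℕ) : poch a (n + 1) = poch a n * (a + n) :=
  Finset.prod_range_succ _ _

lemma poch_succ' (a : ℝ) (n : ℕ) : poch a (n + 1) = a * poch (a + 1) n := by
  simp only [poch, Finset.prod_range_succ', Nat.cast_add, Nat.cast_one, Nat.cast_zero, add_zero]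
  rw [mul_comm]
  congr 1
  exact Finset.prod_congr rfl fun i _ => by ring

lemma poch_nonneg {a : ℝ} (ha : 0 ≤ a) (n : ℕ) : 0 ≤ poch a n :=
  Finset.prod_nonneg fun i _ => by positivity

lemma poch_pos {a : ℝ} (ha : 0 < a) (n : ℕ) : 0 < poch a n :=
  Finset.prod_pos fun i _ => by positivity

lemma poch_eq_ascPochhammer_eval (a : ℝ) (n : ℕ) : poch a n = (ascPochhammer ℝ n).eval a := by
  induction n with
  | zero => simp [poch]
  | succ n ih => rw [poch_succ, ih, ascPochhammer_succ_eval]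

lemma Real.Gamma_add_nat_eq_mul_poch {a : ℝ} (ha : 0 < a) (n : ℕ) :
    Real.Gamma (a + n) = Real.Gamma a * poch a n := by
  induction n with
  | zero => simp [poch]
  | succ n ih =>
    rw [Nat.cast_succ, ← add_assoc, Real.Gamma_add_one (by positivity), ih, poch_succ]
    ring

lemma poch_div_factorial_eq_choose (a : ℝ) (n : ℕ) :
    poch a n / n.factorial = Ring.choose (a + n - 1) n := by
  rw [← Ring.multichoose_eq, div_eq_iff (by positivity), poch_eq_ascPochhammer_eval,
    ← Polynomial.ascPochhammer_smeval_eq_eval,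
    ← Ring.factorial_nsmul_multichoose_eq_ascPochhammer, nsmul_eq_mul, mul_comm]

theorem hasSum_poch_div_factorial_mul_pow (r : ℝ) {t : ℝ} (ht : |t| < 1) :
    HasSum (fun n => poch r n / n.factorial * t ^ n) ((1 - t) ^ (-r)) := by
  have h := (Real.one_div_one_sub_rpow_hasFPowerSeriesOnBall_zero r).hasSum
    (y := t) (by simpa [enorm_eq_nnnorm, ← NNReal.coe_lt_one] using ht)
  simpa [mul_comm, FormalMultilinearSeries.ofScalars_apply_eq, poch_div_factorial_eq_choose,
    Real.rpow_neg (show 0 ≤ 1 - t by linarith [le_abs_self t])] using h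

lemma HasSum.abs_of_nonneg_or_nonpos {ι : Type*} {f : ι → ℝ} {s : ℝ} (hf : HasSum f s)
    (h : (∀ i, 0 ≤ f i) ∨ ∀ i, f i ≤ 0) : HasSum (fun i => |f i|) |s| := by
  rcases h with h | h
  · simpa [abs_of_nonneg (h _), abs_of_nonneg (hf.nonneg h)] using hf
  · simpa [abs_of_nonpos (h _), abs_of_nonpos (hf.nonpos h)] using hf.neg

theorem hasSum_abs_poch_div_factorial_mul_pow {r t : ℝ} (hr : -1 ≤ r) (ht0 : 0 ≤ t)
    (ht1 : t < 1) :
    HasSum (fun n => |poch r n / n.factorial * t ^ n|) (1 + |(1 - t) ^ (-r) - 1|) := by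
  set f := fun n : ℕ => poch r n / n.factorial * t ^ n
  have hf := hasSum_poch_div_factorial_mul_pow r (t := t) (abs_lt.2 ⟨by linarith, ht1⟩)
  have htail : HasSum (fun n => f (n + 1)) ((1 - t) ^ (-r) - 1) := by
    simpa [f] using (hasSum_nat_add_iff' 1).mpr hf
  have hsign : (∀ n, 0 ≤ f (n + 1)) ∨ ∀ n, f (n + 1) ≤ 0 := by
    have hpoch : ∀ n, 0 ≤ poch (r + 1) n / (n + 1).factorial * t ^ (n + 1) := fun n => by
      have := poch_nonneg (show 0 ≤ r + 1 by linarith) n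
      positivity
    rcases le_total 0 r with h | h
    · exact .inl fun n => by
        simpa [f, poch_succ', mul_div_assoc, mul_assoc] using mul_nonneg h (hpoch n)
    · exact .inr fun n => by
        simpa [f, poch_succ', mul_div_assoc, mul_assoc] using
          mul_nonpos_of_nonpos_of_nonneg h (hpoch n)
  refine (hasSum_nat_add_iff' 1).mp ?_
  simpa [f] using htail.abs_of_nonneg_or_nonpos hsign

noncomputable def betaWeight (a b x : ℝ) : ℝ := x ^ (a - 1) * (1 - x) ^ (b - 1)

lemma betaWeight_pos (a b : ℝ) {x : ℝ} (hx : x ∈ Ioo 0 1) : 0 < betaWeight a b x := by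
  obtain ⟨hx0, hx1⟩ := hx
  have := sub_pos.2 hx1
  unfold betaWeight
  positivity

lemma ofReal_betaWeight (a b : ℝ) {x : ℝ} (hx : x ∈ Icc 0 1) :
    (betaWeight a b x : ℂ) = (x : ℂ) ^ ((a : ℂ) - 1) * (1 - (x : ℂ)) ^ ((b : ℂ) - 1) := by
  rw [betaWeight, Complex.ofReal_mul, Complex.ofReal_cpow hx.1,
    Complex.ofReal_cpow (sub_nonneg.2 hx.2)]
  push_cast
  rfl

lemma integrableOn_betaWeight {a b : ℝ} (ha : 0 < a) (hb : 0 < b) :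
    IntegrableOn (betaWeight a b) (Ioo 0 1) := by
  have h := Complex.betaIntegral_convergent (u := a) (v := b) (by simpa) (by simpa)
  rw [intervalIntegrable_iff_integrableOn_Ioc_of_le zero_le_one] at h
  have h' : IntegrableOn (fun x => (betaWeight a b x : ℂ)) (Ioc 0 1) :=
    h.congr_fun (fun x hx => (ofReal_betaWeight a b (Ioc_subset_Icc_self hx)).symm)
      measurableSet_Ioc
  have h'' : Integrable (betaWeight a b) (volume.restrict (Ioc 0 1)) := by simpa using h'.re
  exact IntegrableOn.mono_set h'' Ioo_subset_Ioc_self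

lemma integral_betaWeight {a b : ℝ} (ha : 0 < a) (hb : 0 < b) :
    ∫ x in Ioo 0 1, betaWeight a b x = Real.Gamma a * Real.Gamma b / Real.Gamma (a + b) := by
  have hbeta : Complex.betaIntegral a b = ↑(∫ x in (0 : ℝ)..1, betaWeight a b x) := by
    rw [Complex.betaIntegral, ← intervalIntegral.integral_ofReal]
    refine intervalIntegral.integral_congr fun x hx => ?_
    rw [uIcc_of_le zero_le_one] at hx
    exact (ofReal_betaWeight a b hx).symm
  have h := Complex.Gamma_mul_Gamma_eq_betaIntegral (s := a) (t := b) (by simpa) (by simpa)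
  rw [hbeta, ← Complex.ofReal_add, Complex.Gamma_ofReal, Complex.Gamma_ofReal,
    Complex.Gamma_ofReal] at h
  rw [← integral_Ioc_eq_integral_Ioo, ← intervalIntegral.integral_of_le zero_le_one,
    eq_div_iff (Real.Gamma_pos_of_pos (by linarith)).ne', mul_comm]
  exact_mod_cast h.symm

lemma integral_lt_integral_of_ae_lt {X : Type*} [MeasurableSpace X] {μ : Measure X}
    {f g : X → ℝ} (hμ : μ ≠ 0) (hf : Integrable f μ) (hg : Integrable g μ)
    (h : ∀ᵐ x ∂μ, f x < g x) : ∫ x, f x ∂μ < ∫ x, g x ∂μ := by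
  rw [← sub_pos, ← integral_sub hg hf,
    integral_pos_iff_support_of_nonneg_ae (h.mono fun x hx => (sub_nonneg.2 hx.le)) (hg.sub hf)]
  have hfull : μ {x | f x < g x} = μ univ := measure_congr (ae_eq_univ.2 h)
  refine measure_pos_of_superset (s := {x | f x < g x}) (fun x hx => (sub_pos.2 hx).ne') ?_
  rw [hfull]
  exact Measure.measure_univ_ne_zero.2 hμ

noncomputable def unitSquare : Measure (ℝ × ℝ) :=
  (volume.restrict (Ioo 0 1)).prod (volume.restrict (Ioo 0 1))

lemma unitSquare_ne_zero : unitSquare ≠ 0 := by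
  rw [← Measure.measure_univ_ne_zero, unitSquare, ← univ_prod_univ, Measure.prod_prod]
  simp

lemma ae_mem_unitSquare : ∀ᵐ p ∂unitSquare, p ∈ Ioo (0 : ℝ) 1 ×ˢ Ioo (0 : ℝ) 1 := by
  rw [unitSquare, Measure.prod_restrict]
  exact ae_restrict_mem (measurableSet_Ioo.prod measurableSet_Ioo)

lemma integrable_betaWeight_mul_betaWeight {a b c d : ℝ} (ha : 0 < a) (hb : 0 < b) (hc : 0 < c)
    (hd : 0 < d) :
    Integrable (fun p : ℝ × ℝ => betaWeight a b p.1 * betaWeight c d p.2) unitSquare :=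
  (integrableOn_betaWeight ha hb).mul_prod (integrableOn_betaWeight hc hd)

lemma one_sub_mul_rpow_neg_add_le {x y s u : ℝ} (hx : x ∈ Ioo 0 1) (hy : y ∈ Ioo 0 1)
    (hs : 0 ≤ s) (hu : 0 ≤ u) :
    (1 - x * y) ^ (-(s + u)) ≤ (1 - x) ^ (-s) * (1 - y) ^ (-u) := by
  obtain ⟨hx0, hx1⟩ := hx
  obtain ⟨hy0, hy1⟩ := hy
  rw [neg_add, Real.rpow_add (by nlinarith)]
  exact mul_le_mul
    (Real.rpow_le_rpow_of_nonpos (by linarith) (by nlinarith) (by linarith))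
    (Real.rpow_le_rpow_of_nonpos (by linarith) (by nlinarith) (by linarith))
    (Real.rpow_nonneg (by nlinarith) _) (Real.rpow_nonneg (by linarith) _)

lemma betaWeight_mul_one_sub_rpow_neg (a b s : ℝ) {x : ℝ} (hx : x ∈ Ioo 0 1) :
    betaWeight a b x * (1 - x) ^ (-s) = betaWeight a (b - s) x := by
  rw [betaWeight, betaWeight, mul_assoc, ← Real.rpow_add (sub_pos.2 hx.2)]
  ring_nf

theorem integrable_betaWeight_mul_one_sub_mul_rpow {α β r : ℝ} (hα : 0 < α) (hβ : 0 < β)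
    (hr : r < α + β) :
    Integrable (fun p : ℝ × ℝ =>
      betaWeight α β p.1 * betaWeight β α p.2 * (1 - p.1 * p.2) ^ (-r)) unitSquare := by
  set ρ := max r 0
  have hρ : ρ < α + β := max_lt hr (by linarith)
  have hsu : β / (α + β) * ρ + α / (α + β) * ρ = ρ := by field_simp; ring
  have hβs : 0 < β - β / (α + β) * ρ := by
    rw [sub_pos, div_mul_eq_mul_div, div_lt_iff₀ (by linarith)]
    exact mul_lt_mul_of_pos_left hρ hβ
  have hαu : 0 < α - α / (α + β) * ρ := by
    rw [sub_pos, div_mul_eq_mul_div, div_lt_iff₀ (by linarith)]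
    exact mul_lt_mul_of_pos_left hρ hα
  refine (integrable_betaWeight_mul_betaWeight hα hβs hβ hαu).mono'
    (by unfold betaWeight; fun_prop) ?_
  filter_upwards [ae_mem_unitSquare] with p ⟨hx, hy⟩
  have hxy : 0 < 1 - p.1 * p.2 := by nlinarith [hx.1, hx.2, hy.1, hy.2]
  have hG := mul_pos (betaWeight_pos α β hx) (betaWeight_pos β α hy)
  rw [Real.norm_of_nonneg (by positivity), ← betaWeight_mul_one_sub_rpow_neg α β _ hx,
    ← betaWeight_mul_one_sub_rpow_neg β α _ hy]
  calc betaWeight α β p.1 * betaWeight β α p.2 * (1 - p.1 * p.2) ^ (-r)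
      ≤ betaWeight α β p.1 * betaWeight β α p.2 * (1 - p.1 * p.2) ^ (-ρ) :=
        mul_le_mul_of_nonneg_left (Real.rpow_le_rpow_of_exponent_ge hxy
          (by nlinarith [hx.1, hy.1]) (neg_le_neg (le_max_left _ _))) hG.le
    _ ≤ betaWeight α β p.1 * betaWeight β α p.2 *
          ((1 - p.1) ^ (-(β / (α + β) * ρ)) * (1 - p.2) ^ (-(α / (α + β) * ρ))) := by
        refine mul_le_mul_of_nonneg_left ?_ hG.le
        have := one_sub_mul_rpow_neg_add_le hx hy (s := β / (α + β) * ρ)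
          (u := α / (α + β) * ρ) (by positivity) (by positivity)
        rwa [hsu] at this
    _ = _ := by ring

noncomputable def ftildeIntegrand (α β : ℝ) (p : ℝ × ℝ) : ℝ :=
  betaWeight α β p.1 * betaWeight β α p.2 * (1 - p.1 * p.2) ^ (1 - α - β)

noncomputable def ftildeTerm (α β : ℝ) (n : ℕ) (p : ℝ × ℝ) : ℝ :=
  poch (α + β - 1) n / n.factorial * (p.1 * p.2) ^ n *
    (betaWeight α β p.1 * betaWeight β α p.2)

section Ftilde

variable {α β : ℝ} {p : ℝ × ℝ}

lemma mul_mem_Ico_of_mem_unitSquare (hp : p ∈ Ioo (0 : ℝ) 1 ×ˢ Ioo (0 : ℝ) 1) :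
    p.1 * p.2 ∈ Ico 0 1 := by
  obtain ⟨⟨hx0, hx1⟩, hy0, hy1⟩ := hp
  exact ⟨by positivity, by nlinarith⟩

lemma integrable_ftildeIntegrand (hα : 0 < α) (hβ : 0 < β) :
    Integrable (ftildeIntegrand α β) unitSquare := by
  refine (integrable_betaWeight_mul_one_sub_mul_rpow (r := α + β - 1) hα hβ (by linarith)).congr
    (Eventually.of_forall fun p => ?_)
  simp only [ftildeIntegrand, neg_sub, sub_sub]

lemma hasSum_ftildeTerm (hp : p ∈ Ioo (0 : ℝ) 1 ×ˢ Ioo (0 : ℝ) 1) :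
    HasSum (fun n => ftildeTerm α β n p) (ftildeIntegrand α β p) := by
  obtain ⟨ht0, ht1⟩ := mul_mem_Ico_of_mem_unitSquare hp
  have h := (hasSum_poch_div_factorial_mul_pow (α + β - 1)
    (abs_lt.2 ⟨by linarith, ht1⟩)).mul_right (betaWeight α β p.1 * betaWeight β α p.2)
  rw [neg_sub, ← sub_sub] at h
  simpa only [ftildeTerm, ftildeIntegrand, mul_comm _ ((1 - p.1 * p.2) ^ (1 - α - β))]
    using h

lemma hasSum_abs_ftildeTerm (hαβ : 0 ≤ α + β) (hp : p ∈ Ioo (0 : ℝ) 1 ×ˢ Ioo (0 : ℝ) 1) :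
    HasSum (fun n => |ftildeTerm α β n p|)
      (betaWeight α β p.1 * betaWeight β α p.2 + |ftildeIntegrand α β p -
        betaWeight α β p.1 * betaWeight β α p.2|) := by
  obtain ⟨ht0, ht1⟩ := mul_mem_Ico_of_mem_unitSquare hp
  have hG := mul_pos (betaWeight_pos α β hp.1) (betaWeight_pos β α hp.2)
  have h := (hasSum_abs_poch_div_factorial_mul_pow (r := α + β - 1) (by linarith) ht0
    ht1).mul_right (betaWeight α β p.1 * betaWeight β α p.2)
  have hterm : ∀ n, |ftildeTerm α β n p| =
      |poch (α + β - 1) n / n.factorial * (p.1 * p.2) ^ n| *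
        (betaWeight α β p.1 * betaWeight β α p.2) := fun n => by
    rw [ftildeTerm, abs_mul, abs_of_pos hG]
  have hsum : betaWeight α β p.1 * betaWeight β α p.2 +
      |ftildeIntegrand α β p - betaWeight α β p.1 * betaWeight β α p.2| =
      (1 + |(1 - p.1 * p.2) ^ (-(α + β - 1)) - 1|) *
        (betaWeight α β p.1 * betaWeight β α p.2) := by
    rw [ftildeIntegrand, ← mul_sub_one, abs_mul, abs_of_pos hG, neg_sub, ← sub_sub]
    ring
  simpa only [hterm, hsum] using h

lemma pow_mul_betaWeight (a b : ℝ) (n : ℕ) {x : ℝ} (hx : 0 < x) :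
    x ^ n * betaWeight a b x = betaWeight (a + n) b x := by
  rw [betaWeight, betaWeight, ← Real.rpow_natCast, ← mul_assoc, ← Real.rpow_add hx]
  ring_nf

lemma integral_ftildeTerm (hα : 0 < α) (hβ : 0 < β) (n : ℕ) :
    ∫ p, ftildeTerm α β n p ∂unitSquare =
      (Real.Gamma α * Real.Gamma β / Real.Gamma (α + β)) ^ 2 *
        (poch α n * poch β n * poch (α + β - 1) n /
          (poch (α + β) n * poch (α + β) n * n.factorial) * 1 ^ n) := by
  have hterm : ftildeTerm α β n =ᵐ[unitSquare] fun p => poch (α + β - 1) n / n.factorial *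
      (betaWeight (α + n) β p.1 * betaWeight (β + n) α p.2) := by
    filter_upwards [ae_mem_unitSquare] with p hp
    rw [ftildeTerm, ← pow_mul_betaWeight _ _ _ hp.1.1, ← pow_mul_betaWeight _ _ _ hp.2.1]
    ring
  have hαβ : 0 < α + β := by linarith
  rw [integral_congr_ae hterm, integral_const_mul, unitSquare, integral_prod_mul,
    integral_betaWeight (by positivity) hβ, integral_betaWeight (by positivity) hα,
    show β + n + α = α + β + n by ring, show α + n + β = α + β + n by ring,
    Real.Gamma_add_nat_eq_mul_poch hα, Real.Gamma_add_nat_eq_mul_poch hβ,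
    Real.Gamma_add_nat_eq_mul_poch hαβ]
  have := Real.Gamma_pos_of_pos hαβ
  have := poch_pos hαβ n
  rw [one_pow, mul_one]
  field_simp

theorem Ftilde_eq_integral (hα : 0 < α) (hβ : 0 < β) :
    Ftilde α β = ∫ p, ftildeIntegrand α β p ∂unitSquare := by
  have hG := integrable_betaWeight_mul_betaWeight hα hβ hβ hα
  have hbound : Integrable (fun p => ∑' n, |ftildeTerm α β n p|) unitSquare := by
    refine (hG.add ((integrable_ftildeIntegrand hα hβ).sub hG).abs).congr ?_
    filter_upwards [ae_mem_unitSquare] with p hp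
    exact ((hasSum_abs_ftildeTerm (by linarith) hp).tsum_eq).symm
  have h := hasSum_integral_of_dominated_convergence (fun n p => |ftildeTerm α β n p|)
    (fun n => by unfold ftildeTerm betaWeight; fun_prop)
    (fun n => Eventually.of_forall fun p => (Real.norm_eq_abs _).le)
    (ae_mem_unitSquare.mono fun p hp => (hasSum_abs_ftildeTerm (by linarith) hp).summable)
    hbound (ae_mem_unitSquare.mono fun p hp => hasSum_ftildeTerm hp)
  rw [Ftilde, F32, ← tsum_mul_left, ← h.tsum_eq]
  exact tsum_congr fun n => (integral_ftildeTerm hα hβ n).symm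

lemma ftildeIntegrand_eq_rpow_mul (α β : ℝ) (hp : p ∈ Ioo (0 : ℝ) 1 ×ˢ Ioo (0 : ℝ) 1) :
    ftildeIntegrand α β p = (p.1 * (1 - p.2) / (1 - p.1 * p.2)) ^ (α - 1) *
      ((1 - p.1) ^ (β - 1) * p.2 ^ (β - 1) * (1 - p.1 * p.2) ^ (-β)) := by
  obtain ⟨⟨hx0, hx1⟩, hy0, hy1⟩ := hp
  have hxy : 0 < 1 - p.1 * p.2 := by nlinarith
  rw [ftildeIntegrand, betaWeight, betaWeight, Real.div_rpow (by nlinarith) hxy.le,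
    Real.mul_rpow hx0.le (by linarith), show 1 - α - β = -(α - 1) + -β by ring,
    Real.rpow_add hxy, Real.rpow_neg hxy.le]
  field_simp

lemma ftildeIntegrand_lt_of_lt {α₁ α₂ : ℝ} (β : ℝ) (h : α₁ < α₂)
    (hp : p ∈ Ioo (0 : ℝ) 1 ×ˢ Ioo (0 : ℝ) 1) :
    ftildeIntegrand α₂ β p < ftildeIntegrand α₁ β p := by
  rw [ftildeIntegrand_eq_rpow_mul α₁ β hp, ftildeIntegrand_eq_rpow_mul α₂ β hp]
  obtain ⟨⟨hx0, hx1⟩, hy0, hy1⟩ := hp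
  have hxy : 0 < 1 - p.1 * p.2 := by nlinarith
  refine mul_lt_mul_of_pos_right (Real.rpow_lt_rpow_of_exponent_gt (by positivity) ?_
    (by linarith)) (by positivity)
  rw [div_lt_one hxy]
  nlinarith

theorem strictAntiOn_Ftilde (hβ : 0 < β) : StrictAntiOn (fun α => Ftilde α β) (Ioi 0) :=
  fun α₁ h₁ α₂ h₂ h => by
    simp only [Ftilde_eq_integral h₁ hβ, Ftilde_eq_integral h₂ hβ]
    exact integral_lt_integral_of_ae_lt unitSquare_ne_zero (integrable_ftildeIntegrand h₂ hβ)
      (integrable_ftildeIntegrand h₁ hβ)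
      (ae_mem_unitSquare.mono fun p hp => ftildeIntegrand_lt_of_lt β h hp)

end Ftilde

theorem stmt19 :
    (∀ β : ℝ, 0 < β →
      StrictAntiOn (fun α => Ftilde α β) {α : ℝ | 0 < α ∧ 1 < α + β}) ∧
    Ftilde (1/4) (1/2) - Ftilde (3/4) (1/2) > 0 :=
  ⟨fun β hβ => (strictAntiOn_Ftilde hβ).mono fun α hα => hα.1,
    sub_pos.2 (strictAntiOn_Ftilde (by norm_num) (by norm_num) (by norm_num) (by norm_num))⟩
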